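/- For P ≥ 1 and real x with |x| ≤ 1/(2P), the magnitude of ∑_{p=0}^{P−1} e^{j2πxp} is at least 2P/π. In particular, the focusing sum is bounded below by a constant multiple of P whenever the Doppler mismatch satisfies |f_D − ν| < 1/(2Pτ). -/

import Mathlib

open Real Complex Finset

/-!
Multiplying the focusing sum `S = ∑ e^{jpθ}`, `θ = 2πx`, by `e^{jθ} - 1` telescopes it, so
`‖S‖ · |sin (πx)| = |sin (Pπx)|`. For `P |πx| ≤ π/2`, Jordan's inequality bounds the right side
below by `(2/π) P |πx| ≥ (2P/π) |sin (πx)|`, and `sin (πx) ≠ 0` unless `x = 0`, where `S = P`.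
-/

-- Stated without division, so that it also holds where `sin (θ / 2) = 0`.
theorem norm_sum_range_exp_mul_I_mul_abs_sin (θ : ℝ) (n : ℕ) :
    ‖∑ p ∈ range n, Complex.exp ((p * θ : ℝ) * I)‖ * |Real.sin (θ / 2)| =
      |Real.sin (n * θ / 2)| := by
  have norm_exp_sub_one (φ : ℝ) : ‖Complex.exp (φ * I) - 1‖ = 2 * |Real.sin (φ / 2)| := by
    rw [mul_comm, norm_exp_I_mul_ofReal_sub_one, norm_mul, Real.norm_two, Real.norm_eq_abs]
  have exp_nat_mul (φ : ℝ) (m : ℕ) :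
      Complex.exp ((m * φ : ℝ) * I) = Complex.exp (φ * I) ^ m := by
    rw [← Complex.exp_nat_mul]; push_cast; ring_nf
  have key := congrArg norm (geom_sum_mul (Complex.exp (θ * I)) n)
  simp only [← exp_nat_mul, norm_mul, norm_exp_sub_one] at key
  linarith

theorem mul_abs_sin_le_abs_sin_nat_mul (n : ℕ) {t : ℝ} (h : n * |t| ≤ π / 2) :
    2 * n / π * |Real.sin t| ≤ |Real.sin (n * t)| :=
  calc 2 * n / π * |Real.sin t| ≤ 2 * n / π * |t| :=
        mul_le_mul_of_nonneg_left abs_sin_le_abs (by positivity)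
    _ = 2 / π * |n * t| := by rw [abs_mul, Nat.abs_cast]; ring
    _ ≤ |Real.sin (n * t)| := mul_abs_le_abs_sin (by rwa [abs_mul, Nat.abs_cast])

theorem doppler_focusing_sum_lower_bound_general (P : ℕ) (x : ℝ)
    (hx : |x| ≤ 1 / (2 * (P : ℝ))) :
    2 * (P : ℝ) / Real.pi ≤
      ‖∑ p ∈ Finset.range P,
        Complex.exp (((2 * Real.pi * (x * (p : ℝ))) : ℝ) * Complex.I)‖ := by
  rcases Nat.eq_zero_or_pos P with rfl | hP
  · simp
  have hP' : (0 : ℝ) < P := by exact_mod_cast hP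
  rcases eq_or_ne x 0 with rfl | hx0
  · simp only [zero_mul, mul_zero, ofReal_zero, Complex.exp_zero, sum_const, card_range,
      nsmul_one, Complex.norm_natCast]
    rw [div_le_iff₀ pi_pos]
    nlinarith [pi_gt_three]
  have hPx : (P : ℝ) * |π * x| ≤ π / 2 := by
    rw [le_div_iff₀ (by positivity)] at hx
    rw [abs_mul, abs_of_pos pi_pos]
    nlinarith [pi_pos]
  have hsin : 0 < |Real.sin (π * x)| := by
    have hπx : |π * x| < π := by
      nlinarith [pi_pos, abs_nonneg (π * x), (Nat.one_le_cast (α := ℝ)).2 hP]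
    refine abs_pos.2 fun h => hx0 ?_
    rw [sin_eq_zero_iff_of_lt_of_lt (neg_lt_of_abs_lt hπx) (lt_of_abs_lt hπx)] at h
    exact (mul_eq_zero.1 h).resolve_left pi_ne_zero
  refine le_of_mul_le_mul_right ?_ hsin
  calc 2 * (P : ℝ) / π * |Real.sin (π * x)| ≤ |Real.sin (P * (π * x))| :=
        mul_abs_sin_le_abs_sin_nat_mul P hPx
    _ = _ := by
      convert (norm_sum_range_exp_mul_I_mul_abs_sin (2 * π * x) P).symm using 7 <;> ring

/-- For `P ≥ 1` and `|x| ≤ 1/(2P)`, the focusing sum `∑_{p=0}^{P-1} e^{j2πxp}`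
has magnitude at least `2P/π`. -/
theorem doppler_focusing_sum_lower_bound (P : ℕ) (hP : 1 ≤ P) (x : ℝ)
    (hx : |x| ≤ 1 / (2 * (P : ℝ))) :
    2 * (P : ℝ) / Real.pi ≤
      ‖∑ p ∈ Finset.range P,
        Complex.exp (((2 * Real.pi * (x * (p : ℝ))) : ℝ) * Complex.I)‖ :=
  doppler_focusing_sum_lower_bound_general P x hx
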